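/- arXiv:2311.00849 — 5 statements merged into one kernel-verified Lean document; each statement's English description precedes it below -/
import Mathlib

section
/- Let n ≥ 1 and let λ₁, …, λₙ : [0,1] → ℂ∖{0} be continuous functions with λⱼ(0) = λⱼ(1) for each j = 1, …, n, and let θ₁, …, θₙ : [0,1] → ℝ be continuous functions satisfying λⱼ(t) = |λⱼ(t)| e^{iθⱼ(t)} for all t and j. If 0 does not belong to the convex hull (over ℝ) of the set {λ₁(t), …, λₙ(t)} for any t ∈ [0,1], then there exists an integer m such that Σⱼ (θⱼ(1) − θⱼ(0)) = 2πnm; i.e., n divides the sum of the winding numbers of the loops λ₁, …, λₙ. -/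
/-!
Each lift satisfies `θⱼ(1) = θⱼ(0) + 2π kⱼ` with `kⱼ ∈ ℤ`. If `kⱼ < kᵢ`, the continuous function
`θᵢ - θⱼ` increases by at least `2π` on `[0,1]`, so by the intermediate value theorem it hits an odd
multiple of `π` at some `t`; there `λᵢ(t)` and `λⱼ(t)` point in opposite directions and `0` lies on
the segment between them. Hence all `kⱼ` are equal and the sum is `2πn k`.
-/

open Complex Real Set

theorem zero_mem_segment_smul_smul_neg {𝕜 E : Type*} [Field 𝕜] [LinearOrder 𝕜] [IsStrictOrderedRing 𝕜]
    [AddCommGroup E] [Module 𝕜 E] {r s : 𝕜} (hr : 0 ≤ r) (hs : 0 ≤ s) (u : E) :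
    (0 : E) ∈ segment 𝕜 (r • u) (s • -u) := by
  rw [mem_segment_iff_sameRay, zero_sub, sub_zero, ← smul_neg]
  exact (SameRay.sameRay_nonneg_smul_left (-u) hr).nonneg_smul_right hs

theorem exp_I_mul_eq_exp_I_mul_iff {α β : ℝ} :
    exp (I * α) = exp (I * β) ↔ ∃ k : ℤ, β = α + 2 * π * k := by
  rw [exp_eq_exp_iff_exists_int]
  refine ⟨fun ⟨k, hk⟩ => ⟨-k, ?_⟩, fun ⟨k, hk⟩ => ⟨-k, ?_⟩⟩
  · have : ((β + 2 * π * k : ℝ) : ℂ) = α :=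
      mul_left_cancel₀ I_ne_zero (by push_cast; linear_combination -hk)
    push_cast
    linarith [ofReal_inj.1 this]
  · rw [hk]; push_cast; ring

theorem exp_I_mul_add_pi_add_two_pi_mul_int (α : ℝ) (m : ℤ) :
    exp (I * ↑(α + π + 2 * π * m)) = -exp (I * α) := by
  have : I * ↑(α + π + 2 * π * m) = I * α + π * I + m * (2 * π * I) := by push_cast; ring
  rw [this, Complex.exp_add, Complex.exp_add, exp_pi_mul_I, exp_int_mul_two_pi_mul_I]
  ring

theorem exists_mem_Icc_eq_pi_add_two_pi_mul_int {g : ℝ → ℝ} {a b : ℝ} (hab : a ≤ b)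
    (hg : ContinuousOn g (Icc a b)) (hgab : g a + 2 * π ≤ g b) :
    ∃ t ∈ Icc a b, ∃ m : ℤ, g t = π + 2 * π * m := by
  have h2π : 0 < 2 * π := by positivity
  obtain ⟨hlo, hhi⟩ := toIcoMod_mem_Ico h2π (g a) π
  obtain ⟨t, ht, hgt⟩ := intermediate_value_Icc hab hg ⟨hlo, by linarith⟩
  refine ⟨t, ht, -toIcoDiv h2π (g a) π, ?_⟩
  rw [hgt, toIcoMod, zsmul_eq_mul]
  push_cast; ring

theorem sum_winding_numbers_divisible_of_zero_not_in_convex_hull_general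
    (n : ℕ) (hn : 1 ≤ n) (lam : Fin n → ℝ → ℂ)
    (hne : ∀ j, ∀ t ∈ Set.Icc (0:ℝ) 1, lam j t ≠ 0)
    (hloop : ∀ j, lam j 0 = lam j 1)
    (θ : Fin n → ℝ → ℝ) (hθ : ∀ j, ContinuousOn (θ j) (Set.Icc 0 1))
    (hlift : ∀ j, ∀ t ∈ Set.Icc (0:ℝ) 1,
      lam j t = (‖lam j t‖ : ℂ) * Complex.exp (Complex.I * (θ j t : ℂ)))
    (hconv : ∀ t ∈ Set.Icc (0:ℝ) 1,
      (0 : ℂ) ∉ convexHull ℝ (Set.range fun j => lam j t)) :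
    ∃ m : ℤ, ∑ j, (θ j 1 - θ j 0) = 2 * Real.pi * (n : ℝ) * (m : ℝ) := by
  have h0 : (0 : ℝ) ∈ Icc (0 : ℝ) 1 := left_mem_Icc.2 zero_le_one
  have h1 : (1 : ℝ) ∈ Icc (0 : ℝ) 1 := right_mem_Icc.2 zero_le_one
  have hwinding (j) : ∃ k : ℤ, θ j 1 = θ j 0 + 2 * π * k := by
    have hnorm : (‖lam j 1‖ : ℂ) ≠ 0 := by exact_mod_cast norm_ne_zero_iff.2 (hne j 1 h1)
    rw [← exp_I_mul_eq_exp_I_mul_iff, ← mul_right_inj' hnorm, ← hlift j 1 h1, ← hloop j,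
      ← hlift j 0 h0]
  choose k hk using hwinding
  have hk_le (i j) : k i ≤ k j := by
    by_contra! hlt
    have hgap : (θ i - θ j) 0 + 2 * π ≤ (θ i - θ j) 1 := by
      have : (1 : ℝ) ≤ k i - k j := by exact_mod_cast Int.sub_pos.2 hlt
      simp only [Pi.sub_apply, hk]
      nlinarith [pi_pos]
    obtain ⟨t, ht, m, hm⟩ :=
      exists_mem_Icc_eq_pi_add_two_pi_mul_int zero_le_one ((hθ i).sub (hθ j)) hgap
    have hθi : θ i t = θ j t + π + 2 * π * m := by rw [Pi.sub_apply] at hm; linarith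
    refine hconv t ht (segment_subset_convexHull (mem_range_self j) (mem_range_self i) ?_)
    rw [hlift j t ht, hlift i t ht, hθi, exp_I_mul_add_pi_add_two_pi_mul_int, ← real_smul,
      ← real_smul]
    exact zero_mem_segment_smul_smul_neg (norm_nonneg _) (norm_nonneg _) _
  refine ⟨k ⟨0, hn⟩, ?_⟩
  rw [Finset.sum_eq_card_nsmul fun j _ => show θ j 1 - θ j 0 = 2 * π * k ⟨0, hn⟩ by
    rw [hk, le_antisymm (hk_le _ _) (hk_le _ _)]; ring]
  simp only [Finset.card_univ, Fintype.card_fin, nsmul_eq_mul]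
  ring

/-- If `0` never belongs to the convex hull of the values of `n` nonvanishing loops
`λ₁, …, λₙ`, then `n` divides the sum of their winding numbers around the origin. -/
theorem sum_winding_numbers_divisible_of_zero_not_in_convex_hull
    (n : ℕ) (hn : 1 ≤ n) (lam : Fin n → ℝ → ℂ)
    (hcont : ∀ j, ContinuousOn (lam j) (Set.Icc 0 1))
    (hne : ∀ j, ∀ t ∈ Set.Icc (0:ℝ) 1, lam j t ≠ 0)
    (hloop : ∀ j, lam j 0 = lam j 1)
    (θ : Fin n → ℝ → ℝ) (hθ : ∀ j, ContinuousOn (θ j) (Set.Icc 0 1))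
    (hlift : ∀ j, ∀ t ∈ Set.Icc (0:ℝ) 1,
      lam j t = (‖lam j t‖ : ℂ) * Complex.exp (Complex.I * (θ j t : ℂ)))
    (hconv : ∀ t ∈ Set.Icc (0:ℝ) 1,
      (0 : ℂ) ∉ convexHull ℝ (Set.range fun j => lam j t)) :
    ∃ m : ℤ, ∑ j, (θ j 1 - θ j 0) = 2 * Real.pi * (n : ℝ) * (m : ℝ) :=
  sum_winding_numbers_divisible_of_zero_not_in_convex_hull_general n hn lam hne hloop θ hθ hlift
    hconv
end

section
/- Let n ≥ 1 and let λ₁, …, λₙ : [0,1] → ℂ∖{0} be continuous functions with λⱼ(0) = λⱼ(1) for each j, and let θ₁, …, θₙ : [0,1] → ℝ be continuous functions satisfying λⱼ(t) = |λⱼ(t)| e^{iθⱼ(t)} for all t and j. If there is no integer m with Σⱼ (θⱼ(1) − θⱼ(0)) = 2πnm (i.e., n does not divide the sum of the winding numbers), then there exist indices j, k ∈ {1, …, n} and φ ∈ [0,1] such that 0 lies on the closed segment joining λⱼ(φ) and λₖ(φ) in ℂ. -/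
/-!
Since `λⱼ` is a loop, `e^{iθⱼ(0)} = e^{iθⱼ(1)}`, so `θⱼ(1) − θⱼ(0) = 2π wⱼ` with `wⱼ ∈ ℤ`.
If all `wⱼ` were equal, their sum would be divisible by `n`; so some `wⱼ ≠ wₖ`. Then
`θₖ − θⱼ` changes by at least `2π` on `[0,1]`, and by the intermediate value theorem it
takes a value `π + 2πℓ` at some `φ`: there `λⱼ(φ)` and `λₖ(φ)` point in opposite
directions, so the segment joining them passes through `0`.
-/

open Complex Real Set

lemma exists_int_sub_eq_two_pi_mul_of_eq_norm_mul_exp {z : ℂ} (hz : z ≠ 0) {a b : ℝ}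
    (ha : z = ‖z‖ * exp (I * a)) (hb : z = ‖z‖ * exp (I * b)) :
    ∃ m : ℤ, b - a = 2 * π * m := by
  have hnorm : (‖z‖ : ℂ) ≠ 0 := ofReal_ne_zero.mpr (norm_ne_zero_iff.mpr hz)
  have hexp : exp (I * b) = exp (I * a) := mul_left_cancel₀ hnorm (hb.symm.trans ha)
  obtain ⟨m, hm⟩ := exp_eq_exp_iff_exists_int.mp hexp
  refine ⟨m, ofReal_injective ?_⟩
  push_cast
  linear_combination -I * hm + (b - a - 2 * π * m) * I_sq

lemma exists_pi_add_two_pi_mul_int_mem_uIcc {x y : ℝ} (h : 2 * π ≤ |y - x|) :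
    ∃ ℓ : ℤ, π + 2 * π * ℓ ∈ uIcc x y := by
  obtain ⟨ℓ, ⟨hlo, hhi⟩, -⟩ := existsUnique_add_zsmul_mem_Ico two_pi_pos π (min x y)
  rw [zsmul_eq_mul, mul_comm] at hlo hhi
  exact ⟨ℓ, hlo, by linarith [max_sub_min_eq_abs x y]⟩

lemma exists_eq_pi_add_two_pi_mul_int {f : ℝ → ℝ} {a b : ℝ} (hf : ContinuousOn f (uIcc a b))
    (h : 2 * π ≤ |f b - f a|) : ∃ t ∈ uIcc a b, ∃ ℓ : ℤ, f t = π + 2 * π * ℓ := by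
  obtain ⟨ℓ, hℓ⟩ := exists_pi_add_two_pi_mul_int_mem_uIcc h
  obtain ⟨t, ht, hft⟩ := intermediate_value_uIcc hf hℓ
  exact ⟨t, ht, ℓ, hft⟩

lemma exp_I_mul_eq_neg_of_sub_eq {a b : ℝ} {ℓ : ℤ} (h : b - a = π + 2 * π * ℓ) :
    exp (I * b) = -exp (I * a) := by
  have hb : I * b = I * a + π * I + ℓ * (2 * π * I) := by
    have hb' : b = a + π + 2 * π * ℓ := by linarith
    rw [show (b : ℂ) = a + π + 2 * π * ℓ by exact_mod_cast hb']
    ring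
  rw [hb, Complex.exp_add, Complex.exp_add, exp_pi_mul_I, exp_int_mul_two_pi_mul_I]
  ring

lemma zero_mem_segment_of_eq_norm_mul_exp {z w : ℂ} {a b : ℝ} {ℓ : ℤ}
    (hz : z = ‖z‖ * exp (I * a)) (hw : w = ‖w‖ * exp (I * b)) (h : b - a = π + 2 * π * ℓ) :
    (0 : ℂ) ∈ segment ℝ z w := by
  rw [mem_segment_iff_sameRay, zero_sub, sub_zero]
  have hneg : -z = ‖z‖ • exp (I * b) := by
    rw [exp_I_mul_eq_neg_of_sub_eq h, real_smul, mul_neg, ← hz]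
  rw [hneg, hw, ← real_smul]
  exact ((SameRay.refl _).nonneg_smul_left (norm_nonneg z)).nonneg_smul_right (norm_nonneg w)

theorem zero_on_segment_of_sum_winding_numbers_not_divisible_general
    (n : ℕ) (hn : 1 ≤ n) (lam : Fin n → ℝ → ℂ)
    (hne : ∀ j, ∀ t ∈ Set.Icc (0:ℝ) 1, lam j t ≠ 0)
    (hloop : ∀ j, lam j 0 = lam j 1)
    (θ : Fin n → ℝ → ℝ) (hθ : ∀ j, ContinuousOn (θ j) (Set.Icc 0 1))
    (hlift : ∀ j, ∀ t ∈ Set.Icc (0:ℝ) 1,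
      lam j t = (‖lam j t‖ : ℂ) * Complex.exp (Complex.I * (θ j t : ℂ)))
    (hwind : ¬ ∃ m : ℤ, ∑ j, (θ j 1 - θ j 0) = 2 * Real.pi * (n : ℝ) * (m : ℝ)) :
    ∃ j k : Fin n, ∃ φ ∈ Set.Icc (0:ℝ) 1,
      (0 : ℂ) ∈ segment ℝ (lam j φ) (lam k φ) := by
  have h0 : (0 : ℝ) ∈ Icc (0 : ℝ) 1 := left_mem_Icc.mpr zero_le_one
  have h1 : (1 : ℝ) ∈ Icc (0 : ℝ) 1 := right_mem_Icc.mpr zero_le_one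
  choose w hw using fun j ↦ exists_int_sub_eq_two_pi_mul_of_eq_norm_mul_exp (hne j 0 h0)
    (hlift j 0 h0) (by simpa only [← hloop j] using hlift j 1 h1)
  obtain ⟨j, k, hjk⟩ : ∃ j k, w j ≠ w k := by
    by_contra! hall
    refine hwind ⟨w ⟨0, hn⟩, ?_⟩
    simp only [hw, hall _ ⟨0, hn⟩, Finset.sum_const, Finset.card_univ, Fintype.card_fin,
      nsmul_eq_mul]
    ring
  have hjump : 2 * π ≤ |(θ k 1 - θ j 1) - (θ k 0 - θ j 0)| := by
    have hdiff : (θ k 1 - θ j 1) - (θ k 0 - θ j 0) = 2 * π * (w k - w j : ℤ) := by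
      push_cast
      linear_combination hw k - hw j
    rw [hdiff, abs_mul, abs_of_pos two_pi_pos, ← Int.cast_abs]
    exact le_mul_of_one_le_right two_pi_pos.le
      (by exact_mod_cast Int.one_le_abs (sub_ne_zero.mpr hjk.symm))
  rw [← uIcc_of_le zero_le_one] at hθ
  obtain ⟨φ, hφ, ℓ, hℓ⟩ := exists_eq_pi_add_two_pi_mul_int ((hθ k).sub (hθ j)) hjump
  rw [uIcc_of_le zero_le_one] at hφ
  exact ⟨j, k, φ, hφ,
    zero_mem_segment_of_eq_norm_mul_exp (hlift j φ hφ) (hlift k φ hφ) hℓ⟩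

/-- If `n` does not divide the sum of the winding numbers of `n` nonvanishing loops
`λ₁, …, λₙ`, then at some parameter `φ` the origin lies on the segment joining
`λⱼ(φ)` and `λₖ(φ)` for some indices `j, k`. -/
theorem zero_on_segment_of_sum_winding_numbers_not_divisible
    (n : ℕ) (hn : 1 ≤ n) (lam : Fin n → ℝ → ℂ)
    (hcont : ∀ j, ContinuousOn (lam j) (Set.Icc 0 1))
    (hne : ∀ j, ∀ t ∈ Set.Icc (0:ℝ) 1, lam j t ≠ 0)
    (hloop : ∀ j, lam j 0 = lam j 1)
    (θ : Fin n → ℝ → ℝ) (hθ : ∀ j, ContinuousOn (θ j) (Set.Icc 0 1))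
    (hlift : ∀ j, ∀ t ∈ Set.Icc (0:ℝ) 1,
      lam j t = (‖lam j t‖ : ℂ) * Complex.exp (Complex.I * (θ j t : ℂ)))
    (hwind : ¬ ∃ m : ℤ, ∑ j, (θ j 1 - θ j 0) = 2 * Real.pi * (n : ℝ) * (m : ℝ)) :
    ∃ j k : Fin n, ∃ φ ∈ Set.Icc (0:ℝ) 1,
      (0 : ℂ) ∈ segment ℝ (lam j φ) (lam k φ) :=
  zero_on_segment_of_sum_winding_numbers_not_divisible_general n hn lam hne hloop θ hθ hlift hwind
end

section
/- Let f, g : [0,1] → ℂ∖{0} be continuous functions with f(0) = f(1) and g(0) = g(1), and let θ_f, θ_g : [0,1] → ℝ be continuous functions satisfying f(t) = |f(t)| e^{iθ_f(t)} and g(t) = |g(t)| e^{iθ_g(t)} for all t ∈ [0,1]. If θ_f(1) − θ_f(0) ≠ θ_g(1) − θ_g(0) (i.e., the winding numbers of f and g around the origin differ), then there exists φ ∈ [0,1] such that 0 lies on the closed segment joining f(φ) and g(φ) in ℂ. -/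
/-!
If `0` never lies on the segment `[f t, g t]`, then `f t` is never a negative multiple of
`g t`, so `θf - θg` never meets `π + 2πℤ`. Being continuous on the connected interval
`[0, 1]`, it then varies by less than `2π`; but for loops the total change of each lift is
in `2πℤ`, so the two changes coincide.
-/

open Complex Real Set

theorem zero_mem_segment_of_polar_angle_eq_add_pi {z w : ℂ} {a b : ℝ} {m : ℤ}
    (hz : z = ‖z‖ * exp (I * a)) (hw : w = ‖w‖ * exp (I * b))
    (hab : a = b + π + m * (2 * π)) :
    (0 : ℂ) ∈ segment ℝ z w := by
  have hexp : exp (I * a) = -exp (I * b) := by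
    simpa only [hab, mul_comm I, ofReal_add, ofReal_mul, ofReal_intCast, ofReal_ofNat] using
      (exp_mul_I_periodic.int_mul m (b + π)).trans (exp_mul_I_antiperiodic b)
  rw [mem_segment_iff_sameRay, zero_sub, sub_zero, hz, hw, hexp, mul_neg, neg_neg,
    ← real_smul, ← real_smul]
  exact (SameRay.sameRay_nonneg_smul_left _ (norm_nonneg z)).nonneg_smul_right (norm_nonneg w)

theorem exists_int_eq_add_of_polar {z : ℂ} (hz : z ≠ 0) {a b : ℝ}
    (ha : z = ‖z‖ * exp (I * a)) (hb : z = ‖z‖ * exp (I * b)) :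
    ∃ m : ℤ, a = b + m * (2 * π) := by
  rw [← Circle.exp_eq_exp, Circle.ext_iff, Circle.coe_exp, Circle.coe_exp, mul_comm _ I,
    mul_comm _ I]
  exact mul_left_cancel₀ (by simpa using hz) (ha.symm.trans hb)

theorem IsPreconnected.abs_sub_lt_of_forall_ne_add_int_mul {α : Type*} [TopologicalSpace α]
    {s : Set α} (hs : IsPreconnected s) {ψ : α → ℝ} (hψ : ContinuousOn ψ s) {c p : ℝ}
    (hp : 0 < p) (havoid : ∀ t ∈ s, ∀ m : ℤ, ψ t ≠ c + m * p) {x y : α} (hx : x ∈ s)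
    (hy : y ∈ s) :
    |ψ x - ψ y| < p := by
  have hlt : ∀ x ∈ s, ∀ y ∈ s, ψ y < ψ x + p := by
    intro x hx y hy
    by_contra! hxy
    obtain ⟨m, hm, -⟩ := existsUnique_add_zsmul_mem_Ico hp c (ψ x)
    obtain ⟨t, ht, hψt⟩ := (hs.image ψ hψ).ordConnected.out (mem_image_of_mem ψ hx)
      (mem_image_of_mem ψ hy) ⟨hm.1, hm.2.le.trans hxy⟩
    exact havoid t ht m (by rw [hψt, zsmul_eq_mul])
  rw [abs_sub_lt_iff]
  constructor <;> linarith [hlt x hx y hy, hlt y hy x hx]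

theorem zero_on_segment_of_winding_numbers_ne_general
    (f g : ℝ → ℂ)
    (hfloop : f 0 = f 1) (hgloop : g 0 = g 1)
    (θf θg : ℝ → ℝ)
    (hθf : ContinuousOn θf (Set.Icc 0 1)) (hθg : ContinuousOn θg (Set.Icc 0 1))
    (hliftf : ∀ t ∈ Set.Icc (0:ℝ) 1,
      f t = ((‖f t‖ : ℝ) : ℂ) * Complex.exp (Complex.I * (θf t : ℂ)))
    (hliftg : ∀ t ∈ Set.Icc (0:ℝ) 1,
      g t = ((‖g t‖ : ℝ) : ℂ) * Complex.exp (Complex.I * (θg t : ℂ)))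
    (hwind : θf 1 - θf 0 ≠ θg 1 - θg 0) :
    ∃ φ ∈ Set.Icc (0:ℝ) 1, (0 : ℂ) ∈ segment ℝ (f φ) (g φ) := by
  by_contra! hseg
  have h0 : (0 : ℝ) ∈ Icc (0 : ℝ) 1 := left_mem_Icc.2 zero_le_one
  have h1 : (1 : ℝ) ∈ Icc (0 : ℝ) 1 := right_mem_Icc.2 zero_le_one
  have hf0 : f 0 ≠ 0 := fun h ↦ hseg 0 h0 (h ▸ left_mem_segment ℝ _ _)
  have hg0 : g 0 ≠ 0 := fun h ↦ hseg 0 h0 (h ▸ right_mem_segment ℝ _ _)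
  obtain ⟨m, hm⟩ := exists_int_eq_add_of_polar hf0 (hfloop ▸ hliftf 1 h1) (hliftf 0 h0)
  obtain ⟨n, hn⟩ := exists_int_eq_add_of_polar hg0 (hgloop ▸ hliftg 1 h1) (hliftg 0 h0)
  have havoid : ∀ t ∈ Icc (0 : ℝ) 1, ∀ k : ℤ, (θf - θg) t ≠ π + k * (2 * π) :=
    fun t ht k hk ↦ hseg t ht <| zero_mem_segment_of_polar_angle_eq_add_pi (hliftf t ht)
      (hliftg t ht) (m := k) (by rw [Pi.sub_apply] at hk; linarith)
  have hclose : |(θf 1 - θg 1) - (θf 0 - θg 0)| < 2 * π :=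
    isPreconnected_Icc.abs_sub_lt_of_forall_ne_add_int_mul (hθf.sub hθg) two_pi_pos havoid h1 h0
  have hmn : m = n := by
    rw [hm, hn, show θf 0 + m * (2 * π) - (θg 0 + n * (2 * π)) - (θf 0 - θg 0)
        = ((m - n : ℤ) : ℝ) * (2 * π) by push_cast; ring,
      abs_mul, abs_of_pos two_pi_pos, mul_lt_iff_lt_one_left two_pi_pos] at hclose
    exact sub_eq_zero.1 (Int.abs_lt_one_iff.1 (by exact_mod_cast hclose))
  exact hwind (by rw [hm, hn, hmn]; ring)

/-- If two nonvanishing loops `f` and `g` in `ℂ ∖ {0}` have different winding numbers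
around the origin, then at some parameter `φ` the origin lies on the segment joining
`f(φ)` and `g(φ)`. -/
theorem zero_on_segment_of_winding_numbers_ne
    (f g : ℝ → ℂ)
    (hf : ContinuousOn f (Set.Icc 0 1)) (hg : ContinuousOn g (Set.Icc 0 1))
    (hfne : ∀ t ∈ Set.Icc (0:ℝ) 1, f t ≠ 0)
    (hgne : ∀ t ∈ Set.Icc (0:ℝ) 1, g t ≠ 0)
    (hfloop : f 0 = f 1) (hgloop : g 0 = g 1)
    (θf θg : ℝ → ℝ)
    (hθf : ContinuousOn θf (Set.Icc 0 1)) (hθg : ContinuousOn θg (Set.Icc 0 1))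
    (hliftf : ∀ t ∈ Set.Icc (0:ℝ) 1,
      f t = ((‖f t‖ : ℝ) : ℂ) * Complex.exp (Complex.I * (θf t : ℂ)))
    (hliftg : ∀ t ∈ Set.Icc (0:ℝ) 1,
      g t = ((‖g t‖ : ℝ) : ℂ) * Complex.exp (Complex.I * (θg t : ℂ)))
    (hwind : θf 1 - θf 0 ≠ θg 1 - θg 0) :
    ∃ φ ∈ Set.Icc (0:ℝ) 1, (0 : ℂ) ∈ segment ℝ (f φ) (g φ) :=
  zero_on_segment_of_winding_numbers_ne_general f g hfloop hgloop θf θg hθf hθg hliftf hliftg hwind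
end

section
/- For every n×n complex matrix M, the numerical range W(M) = {x* M x : x ∈ ℂⁿ, x*x = 1} is a convex subset of ℂ. -/
/-!
Shifting and scaling `M` to `(M - p) / (q - p)` reduces the theorem to: if `0` and `1` lie in
`W(N)`, then so does every `t ∈ [0, 1]`. Take unit vectors `x`, `y` with `x* N x = 0` and
`y* N y = 1`, and multiply `y` by a phase making the cross term `x* N y + y* N x` real. Then the
form `w* N w` is real on the real span of `x` and `y`, and along the segment from `x` to `y`
(which avoids `0`) the quotient `w* N w / w* w` runs continuously from `0` to `1`.
-/

open Matrix ComplexOrder Set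

namespace Matrix

variable {ι : Type*} [Fintype ι]

def numericalRange (M : Matrix ι ι ℂ) : Set ℂ :=
  {z | ∃ x : ι → ℂ, star x ⬝ᵥ x = 1 ∧ star x ⬝ᵥ M *ᵥ x = z}

lemma star_smul_dotProduct_smul (c : ℂ) (x y : ι → ℂ) :
    star (c • x) ⬝ᵥ (c • y) = star c * c * (star x ⬝ᵥ y) := by
  simp only [star_smul, smul_dotProduct, dotProduct_smul, smul_eq_mul]
  ring

lemma star_smul_dotProduct_mulVec_smul (M : Matrix ι ι ℂ) (c : ℂ) (x : ι → ℂ) :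
    star (c • x) ⬝ᵥ M *ᵥ (c • x) = star c * c * (star x ⬝ᵥ M *ᵥ x) := by
  rw [mulVec_smul, star_smul_dotProduct_smul]

lemma star_add_dotProduct_mulVec_add (M : Matrix ι ι ℂ) (a b : ℝ) (x y : ι → ℂ) :
    star ((a : ℂ) • x + (b : ℂ) • y) ⬝ᵥ M *ᵥ ((a : ℂ) • x + (b : ℂ) • y) =
      a ^ 2 * (star x ⬝ᵥ M *ᵥ x) + b ^ 2 * (star y ⬝ᵥ M *ᵥ y) +
        a * b * (star x ⬝ᵥ M *ᵥ y + star y ⬝ᵥ M *ᵥ x) := by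
  simp only [star_add, star_smul, Complex.star_def, Complex.conj_ofReal, mulVec_add, mulVec_smul,
    dotProduct_add, add_dotProduct, dotProduct_smul, smul_dotProduct, smul_eq_mul]
  ring

lemma star_dotProduct_smul_add_smul_one_mulVec [DecidableEq ι] (M : Matrix ι ι ℂ) (a b : ℂ)
    {x : ι → ℂ} (hx : star x ⬝ᵥ x = 1) :
    star x ⬝ᵥ (a • M + b • 1) *ᵥ x = a * (star x ⬝ᵥ M *ᵥ x) + b := by
  rw [add_mulVec, smul_mulVec, smul_mulVec, one_mulVec, dotProduct_add, dotProduct_smul,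
    dotProduct_smul, hx, smul_eq_mul, smul_eq_mul, mul_one]

lemma numericalRange_smul_add_smul_one [DecidableEq ι] (M : Matrix ι ι ℂ) (a b : ℂ) :
    numericalRange (a • M + b • 1) = (fun z => a * z + b) '' numericalRange M := by
  ext z
  constructor
  · rintro ⟨x, hx, rfl⟩
    exact ⟨_, ⟨x, hx, rfl⟩, (star_dotProduct_smul_add_smul_one_mulVec M a b hx).symm⟩
  · rintro ⟨_, ⟨x, hx, rfl⟩, rfl⟩
    exact ⟨x, hx, star_dotProduct_smul_add_smul_one_mulVec M a b hx⟩

lemma div_mem_numericalRange (M : Matrix ι ι ℂ) {w : ι → ℂ} (hw : w ≠ 0) :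
    (star w ⬝ᵥ M *ᵥ w) / (star w ⬝ᵥ w) ∈ numericalRange M := by
  obtain ⟨r, hr, hrw⟩ : ∃ r : ℝ, 0 < r ∧ (r : ℂ) = star w ⬝ᵥ w := by
    obtain ⟨hre, him⟩ := Complex.pos_iff.1 (dotProduct_star_self_pos_iff.2 hw)
    exact ⟨_, hre, Complex.ext (by simp) (by simpa using him)⟩
  set c : ℂ := (((Real.sqrt r)⁻¹ : ℝ) : ℂ)
  have hc : star c * c = (star w ⬝ᵥ w)⁻¹ := by
    rw [← hrw, Complex.star_def, Complex.conj_ofReal, ← Complex.ofReal_mul, ← mul_inv,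
      Real.mul_self_sqrt hr.le, Complex.ofReal_inv]
  refine ⟨c • w, ?_, ?_⟩
  · rw [star_smul_dotProduct_smul, hc, inv_mul_cancel₀ (hrw ▸ by exact_mod_cast hr.ne')]
  · rw [star_smul_dotProduct_mulVec_smul, hc, inv_mul_eq_div]

lemma exists_star_mul_self_eq_one_im_eq_zero (α β : ℂ) :
    ∃ c : ℂ, star c * c = 1 ∧ (c * α + star c * β).im = 0 := by
  -- `c * α + star c * β` and `c * (α - star β)` have the same imaginary part.
  set d := α - star β
  set c := Complex.exp (-d.arg * Complex.I)
  have hcd : c * d = ‖d‖ := by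
    conv_lhs => rw [← Complex.norm_mul_exp_arg_mul_I d]
    rw [mul_left_comm, ← Complex.exp_add]
    simp
  refine ⟨c, ?_, ?_⟩
  · rw [Complex.star_def, ← Complex.normSq_eq_conj_mul_self, Complex.normSq_eq_norm_sq]
    simp [c, Complex.norm_exp]
  · have him : (c * α + star c * β).im = (c * d).im := by
      simp only [d, Complex.mul_im, Complex.add_im, Complex.sub_re, Complex.sub_im,
        Complex.star_def, Complex.conj_re, Complex.conj_im]
      ring
    rw [him, hcd, Complex.ofReal_im]

lemma sub_smul_add_smul_ne_zero (M : Matrix ι ι ℂ) {x y : ι → ℂ} (hx : x ≠ 0)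
    (hx0 : star x ⬝ᵥ M *ᵥ x = 0) (hy : star y ⬝ᵥ M *ᵥ y ≠ 0) (s : ℂ) :
    (1 - s) • x + s • y ≠ 0 := by
  intro h
  have hsy : s • y = (s - 1) • x := by
    rw [← neg_sub, neg_smul, ← add_eq_zero_iff_eq_neg', h]
  have hs : s = 0 := by
    have := congrArg (fun v => star v ⬝ᵥ M *ᵥ v) hsy
    simp only [star_smul_dotProduct_mulVec_smul, hx0, mul_zero, mul_eq_zero, hy, or_false] at this
    simpa using this
  simp [hs, hx] at h

lemma ofReal_mem_numericalRange_of_zero_mem_of_one_mem {N : Matrix ι ι ℂ}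
    (h0 : 0 ∈ numericalRange N) (h1 : 1 ∈ numericalRange N) {t : ℝ} (ht : t ∈ Icc (0 : ℝ) 1) :
    (t : ℂ) ∈ numericalRange N := by
  obtain ⟨x, hx, hx0⟩ := h0
  obtain ⟨y₀, hy₀, hy₀1⟩ := h1
  obtain ⟨c, hc, hcross⟩ :=
    exists_star_mul_self_eq_one_im_eq_zero (star x ⬝ᵥ N *ᵥ y₀) (star y₀ ⬝ᵥ N *ᵥ x)
  set y := c • y₀
  have hy : star y ⬝ᵥ y = 1 := by rw [star_smul_dotProduct_smul, hc, one_mul, hy₀]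
  have hy1 : star y ⬝ᵥ N *ᵥ y = 1 := by rw [star_smul_dotProduct_mulVec_smul, hc, one_mul, hy₀1]
  replace hcross : (star x ⬝ᵥ N *ᵥ y + star y ⬝ᵥ N *ᵥ x).im = 0 := by
    simpa only [y, mulVec_smul, dotProduct_smul, star_smul, smul_dotProduct, smul_eq_mul]
      using hcross
  set u : ℝ → ι → ℂ := fun s => ((1 - s : ℝ) : ℂ) • x + (s : ℂ) • y
  have hu : ∀ s, u s ≠ 0 := fun s => by
    simpa [u] using sub_smul_add_smul_ne_zero N (by rintro rfl; simp at hx) hx0 (by simp [hy1]) s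
  have hQu : ∀ s, (star (u s) ⬝ᵥ N *ᵥ u s).im = 0 := fun s => by
    rw [star_add_dotProduct_mulVec_add, hx0, hy1]
    simp [← Complex.ofReal_pow, hcross]
  obtain ⟨s, -, hs⟩ : ∃ s ∈ Icc (0 : ℝ) 1,
      (star (u s) ⬝ᵥ N *ᵥ u s - t * (star (u s) ⬝ᵥ u s)).re = 0 := by
    refine intermediate_value_Icc zero_le_one (Continuous.continuousOn ?_) ⟨?_, ?_⟩
    · fun_prop
    · simp [u, hx, hx0, ht.1]
    · simp [u, hy, hy1, ht.2]
  have hQs : star (u s) ⬝ᵥ N *ᵥ u s = t * (star (u s) ⬝ᵥ u s) := by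
    refine Complex.ext (by simpa [sub_eq_zero] using hs) ?_
    rw [hQu, Complex.im_ofReal_mul, ← (Complex.nonneg_iff.1 (dotProduct_star_self_nonneg _)).2,
      mul_zero]
  simpa [hQs, hu s] using div_mem_numericalRange N (hu s)

end Matrix

/-- Toeplitz–Hausdorff theorem: the numerical range of a complex matrix is convex. -/
theorem numerical_range_convex
    (n : ℕ) (M : Matrix (Fin n) (Fin n) ℂ) :
    Convex ℝ {z : ℂ | ∃ x : Fin n → ℂ, star x ⬝ᵥ x = 1 ∧ star x ⬝ᵥ M.mulVec x = z} := by
  change Convex ℝ (numericalRange M)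
  refine convex_iff_segment_subset.2 fun p hp q hq z hz => ?_
  rcases eq_or_ne p q with rfl | hpq
  · rw [segment_same, mem_singleton_iff] at hz
    rwa [hz]
  rw [segment_eq_image'] at hz
  obtain ⟨t, ht, rfl⟩ := hz
  have hqp : q - p ≠ 0 := sub_ne_zero.2 hpq.symm
  set f : ℂ → ℂ := fun z => (q - p)⁻¹ * z + -(q - p)⁻¹ * p
  have hf : Function.Injective f := fun z w h => by simpa [f, hqp] using h
  have hf0 : f p = 0 := by simp [f]
  have hf1 : f q = 1 := by simp only [f]; field_simp; ring
  have hft : f (p + t • (q - p)) = t := by simp only [f, Complex.real_smul]; field_simp; ring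
  rw [← hf.mem_set_image, ← numericalRange_smul_add_smul_one, hft]
  refine ofReal_mem_numericalRange_of_zero_mem_of_one_mem ?_ ?_ ht <;>
    rw [numericalRange_smul_add_smul_one]
  exacts [hf0 ▸ mem_image_of_mem f hp, hf1 ▸ mem_image_of_mem f hq]
end

section
/- Let l ≥ 1 and let z₀, z₁, …, z_{l−1} ∈ ℂ be points such that 0 does not belong to the convex hull (over ℝ) of {z₀, …, z_{l−1}}. Then the total winding of the closed directed polygon with vertices z₀ → z₁ → ⋯ → z_{l−1} → z₀ around the origin vanishes: Σ_{s=0}^{l−1} ∫₀¹ (z_{s+1} − z_s)/((1−t) z_s + t z_{s+1}) dt = 0, where indices are taken modulo l (note each integrand is well-defined since every segment [z_s, z_{s+1}] lies in the convex hull and hence avoids 0). -/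
/-!
Separating the origin from the convex hull `K` of the vertices gives `c : ℂ` with `0 < re (c * w)`
on `K`. Then `w ↦ log (c * w)` is holomorphic on `K`, and since every edge lies in `K` it is a
primitive of each edge integrand; the edge integrals therefore telescope around the closed polygon.
-/

open Complex Set

theorem Complex.exists_forall_re_mul_pos_of_zero_notMem {K : Set ℂ} (hconv : Convex ℝ K)
    (hclosed : IsClosed K) (h0 : (0 : ℂ) ∉ K) : ∃ c : ℂ, ∀ w ∈ K, 0 < (c * w).re := by
  obtain ⟨f, u, hf0, hfK⟩ :=
    RCLike.geometric_hahn_banach_point_closed (𝕜 := ℂ) hconv hclosed h0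
  refine ⟨f 1, fun w hw => ?_⟩
  have hf : f w = f 1 * w := by rw [mul_comm, ← smul_eq_mul, ← map_smul, smul_eq_mul, mul_one]
  simp only [map_zero, RCLike.re_to_complex] at hf0 hfK
  rw [← hf]
  linarith [hfK w hw]

theorem Convex.one_sub_mul_add_mul_mem {K : Set ℂ} (hK : Convex ℝ K) {a b : ℂ} (ha : a ∈ K)
    (hb : b ∈ K) {t : ℝ} (ht : t ∈ Icc (0 : ℝ) 1) : (1 - (t : ℂ)) * a + t * b ∈ K := by
  have := hK ha hb (sub_nonneg.2 ht.2) ht.1 (sub_add_cancel 1 t)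
  simpa only [real_smul, ofReal_sub, ofReal_one] using this

theorem integral_sub_div_segment_eq_log_sub {a b c : ℂ}
    (hseg : ∀ t ∈ Icc (0 : ℝ) 1, c * ((1 - (t : ℂ)) * a + t * b) ∈ slitPlane) :
    ∫ t in (0 : ℝ)..1, (b - a) / ((1 - (t : ℂ)) * a + t * b) = log (c * b) - log (c * a) := by
  have hI : uIcc (0 : ℝ) 1 = Icc 0 1 := uIcc_of_le zero_le_one
  have hne : ∀ t ∈ uIcc (0 : ℝ) 1, (1 - (t : ℂ)) * a + t * b ≠ 0 := fun t ht h => by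
    simpa [h] using hseg t (hI ▸ ht)
  have hderiv : ∀ t ∈ uIcc (0 : ℝ) 1,
      HasDerivAt (fun t : ℝ => log (c * ((1 - (t : ℂ)) * a + t * b)))
        ((b - a) / ((1 - (t : ℂ)) * a + t * b)) t := by
    intro t ht
    have hγ : HasDerivAt (fun t : ℝ => c * ((1 - (t : ℂ)) * a + t * b)) (c * (b - a)) t := by
      have h := (((hasDerivAt_id t).ofReal_comp.mul_const (b - a)).const_add a).const_mul c
      simp only [id, ofReal_one, one_mul] at h
      exact h.congr_of_eventuallyEq (.of_forall fun s => by ring)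
    convert hγ.clog_real (hseg t (hI ▸ ht)) using 1
    have hc : c ≠ 0 := by rintro rfl; simpa using hseg 0 ⟨le_rfl, zero_le_one⟩
    field_simp [hne t ht]
  have hcont : ContinuousOn (fun t : ℝ => (b - a) / ((1 - (t : ℂ)) * a + t * b)) (uIcc 0 1) :=
    continuousOn_const.div (by fun_prop) hne
  rw [intervalIntegral.integral_eq_sub_of_hasDerivAt hderiv hcont.intervalIntegrable]
  simp

theorem polygon_winding_zero_of_zero_not_in_convex_hull_general
    (l : ℕ) (z : ℕ → ℂ) (hz : z l = z 0)
    (hconv : (0 : ℂ) ∉ convexHull ℝ (z '' {s | s < l})) :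
    ∑ s ∈ Finset.range l,
      ∫ t in (0:ℝ)..1,
        (z (s + 1) - z s) / ((1 - (t : ℂ)) * z s + (t : ℂ) * z (s + 1)) = 0 := by
  set K := convexHull ℝ (z '' {s | s < l})
  have hK : IsCompact K := ((finite_Iio l).image z).isCompact_convexHull ℝ
  obtain ⟨c, hc⟩ :=
    exists_forall_re_mul_pos_of_zero_notMem (convex_convexHull ℝ _) hK.isClosed hconv
  have hmem : ∀ s < l, z s ∈ K := fun s hs => subset_convexHull ℝ _ ⟨s, hs, rfl⟩
  have hmem_succ : ∀ s < l, z (s + 1) ∈ K := fun s hs => by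
    rcases (show s + 1 ≤ l from hs).lt_or_eq with h | h
    · exact hmem _ h
    · rw [h, hz]; exact hmem 0 (by omega)
  have hedge : ∀ s ∈ Finset.range l, ∫ t in (0:ℝ)..1,
      (z (s + 1) - z s) / ((1 - (t : ℂ)) * z s + (t : ℂ) * z (s + 1))
        = log (c * z (s + 1)) - log (c * z s) := fun s hs =>
    integral_sub_div_segment_eq_log_sub fun t ht => .inl <| hc _ <|
      (convex_convexHull ℝ _).one_sub_mul_add_mul_mem (hmem s (Finset.mem_range.1 hs))
        (hmem_succ s (Finset.mem_range.1 hs)) ht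
  rw [Finset.sum_congr rfl hedge, Finset.sum_range_sub (fun s => log (c * z s)), hz, sub_self]

/-- If the origin is not in the convex hull of the vertices of a closed directed polygon
`z₀ → z₁ → ⋯ → z_{l−1} → z₀`, then the total winding of the polygon around the origin
(computed as a sum of logarithmic-derivative integrals over each edge) vanishes. -/
theorem polygon_winding_zero_of_zero_not_in_convex_hull
    (l : ℕ) (hl : 1 ≤ l) (z : ℕ → ℂ) (hz : z l = z 0)
    (hconv : (0 : ℂ) ∉ convexHull ℝ (z '' {s | s < l})) :
    ∑ s ∈ Finset.range l,
      ∫ t in (0:ℝ)..1,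
        (z (s + 1) - z s) / ((1 - (t : ℂ)) * z s + (t : ℂ) * z (s + 1)) = 0 :=
  polygon_winding_zero_of_zero_not_in_convex_hull_general l z hz hconv
end
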